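/- arXiv:2404.02301 — 4 statements merged into one kernel-verified Lean document; each statement's English description precedes it below -/
import Mathlib

section
/- Let q ≥ 3 and let G be a connected tree on the vertex set {1,…,s} with s ≥ 3, and let C_G be its edge code. Let W ⊆ ℕ be the set of Hamming weights of the nonzero codewords of C_G. Then for every integer t with 1 ≤ t ≤ (s−1)/2, the t-th smallest element of W equals (q−1)^s − (q−1)^{s−1} + (q−1)^{s−2} − ⋯ + (−1)^{2t+1}(q−1)^{s−(2t−1)}, i.e. Σ_{i=0}^{2t−1} (−1)^i (q−1)^{s−i}. -/
open MvPolynomial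

/-- The affine torus `T = (K*)^s`: points of `K^s` with all coordinates nonzero. -/
abbrev Torus (s : ℕ) (K : Type) [Zero K] := {P : Fin s → K // ∀ i, P i ≠ 0}

/-- The evaluation map `f ↦ (f(P))_{P ∈ T}` as a linear map. -/
noncomputable def evalTorus (s : ℕ) (K : Type) [Field K] :
    MvPolynomial (Fin s) K →ₗ[K] (Torus s K → K) :=
  LinearMap.pi fun P => (aeval (P.1 : Fin s → K)).toLinearMap

/-- The edge code of a hypergraph with edge set `E` on vertex set `{1,…,s}`:
the image under evaluation of the span of the squarefree monomials `∏_{j ∈ e} t_j`. -/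
noncomputable def edgeCode (s : ℕ) (K : Type) [Field K] (E : Set (Finset (Fin s))) :
    Submodule K (Torus s K → K) :=
  (Submodule.span K ((fun e : Finset (Fin s) => ∏ j ∈ e, X j) '' E)).map (evalTorus s K)

/-- Hamming weight of a word indexed by the torus. -/
noncomputable def wt {s : ℕ} {K : Type} [Field K] (c : Torus s K → K) : ℕ :=
  {P | c P ≠ 0}.ncard

/-- Minimum distance of a linear code: the least Hamming weight of a nonzero codeword. -/
noncomputable def minDist {s : ℕ} {K : Type} [Field K] (C : Submodule K (Torus s K → K)) : ℕ :=
  sInf {w : ℕ | ∃ c ∈ C, c ≠ 0 ∧ wt c = w}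

/-- The squarefree monomial `t_i t_j` attached to an edge `{i,j}` of a simple graph. -/
noncomputable def edgeMonSym2 (s : ℕ) (K : Type) [Field K] (e : Sym2 (Fin s)) :
    MvPolynomial (Fin s) K :=
  Sym2.lift ⟨fun i j => X i * X j, fun _ _ => mul_comm _ _⟩ e

/-- The edge code of a simple graph on `{1,…,s}`. -/
noncomputable def graphCode (s : ℕ) (K : Type) [Field K] (G : SimpleGraph (Fin s)) :
    Submodule K (Torus s K → K) :=
  (Submodule.span K (edgeMonSym2 s K '' G.edgeSet)).map (evalTorus s K)

/-!
Let `Q = q - 1`. Take a codeword `f = ∑ c_e t_i t_j` supported on a set `F` of `k` edges of a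
forest, all `c_e ≠ 0`, and a pendant edge `{u, w}` of `F` with leaf `u`. Then
`f = c t_w · t_u + g` with `g` free of `t_u`: over a point where `g ≠ 0` exactly one value of
`t_u ∈ K*` kills `f`, and over a point where `g = 0` none does. Hence
`Q · wt f + wt g = Q ^ (s + 1)`, and by induction on `k` the weight of `f` is
`A_k = ∑_{i<k} (-1)^i Q^(s-i)`. So the nonzero weights of `C_G` are `A_1, …, A_{s-1}`.
Since `(Q + 1) A_k = Q^(s+1) - (-1)^k Q^(s+1-k)`, the even-indexed `A_k` increase and stay below
`Q^(s+1) / (Q + 1)` while the odd-indexed ones exceed it; thus the `t`-th smallest weight is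
`A_{2t}`.
-/

open Finset

def altPowSum (Q : ℤ) (s k : ℕ) : ℤ := ∑ i ∈ range k, (-1) ^ i * Q ^ (s - i)

section altPowSum

variable (Q : ℤ) {s : ℕ}

theorem altPowSum_zero : altPowSum Q s 0 = 0 := rfl

theorem altPowSum_succ (k : ℕ) :
    altPowSum Q s (k + 1) = altPowSum Q s k + (-1) ^ k * Q ^ (s - k) :=
  sum_range_succ _ _

theorem add_one_mul_altPowSum {k : ℕ} (hk : k ≤ s + 1) :
    (Q + 1) * altPowSum Q s k = Q ^ (s + 1) - (-1) ^ k * Q ^ (s + 1 - k) := by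
  induction k with
  | zero => simp [altPowSum_zero]
  | succ k ih =>
    rw [altPowSum_succ, mul_add, ih (by omega), show s + 1 - k = s - k + 1 by omega,
      show s + 1 - (k + 1) = s - k by omega]
    ring

theorem mul_altPowSum_succ_add_altPowSum {k : ℕ} (hk : k ≤ s) :
    Q * altPowSum Q s (k + 1) + altPowSum Q s k = Q ^ (s + 1) := by
  have h := add_one_mul_altPowSum Q (s := s) (k := k + 1) (by omega)
  rw [show s + 1 - (k + 1) = s - k by omega] at h
  linear_combination h - altPowSum_succ Q k

variable {Q}

theorem add_one_mul_altPowSum_two_mul {j : ℕ} (hj : 2 * j ≤ s + 1) :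
    (Q + 1) * altPowSum Q s (2 * j) = Q ^ (s + 1) - Q ^ (s + 1 - 2 * j) := by
  simp [add_one_mul_altPowSum Q hj, pow_mul]

theorem add_one_mul_altPowSum_two_mul_add_one {k : ℕ} (hk : 2 * k + 1 ≤ s + 1) :
    (Q + 1) * altPowSum Q s (2 * k + 1) = Q ^ (s + 1) + Q ^ (s - 2 * k) := by
  rw [add_one_mul_altPowSum Q hk, show s + 1 - (2 * k + 1) = s - 2 * k by omega]
  simp [pow_succ, pow_mul]

theorem altPowSum_two_mul_lt_two_mul (hQ : 2 ≤ Q) {j k : ℕ} (hjk : j < k)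
    (hk : 2 * k ≤ s + 1) : altPowSum Q s (2 * j) < altPowSum Q s (2 * k) := by
  refine lt_of_mul_lt_mul_left ?_ (by omega : (0 : ℤ) ≤ Q + 1)
  rw [add_one_mul_altPowSum_two_mul (by omega), add_one_mul_altPowSum_two_mul hk]
  have : Q ^ (s + 1 - 2 * k) < Q ^ (s + 1 - 2 * j) := pow_lt_pow_right₀ (by omega) (by omega)
  linarith

theorem altPowSum_two_mul_lt_two_mul_add_one (hQ : 0 < Q) {j k : ℕ} (hj : 2 * j ≤ s + 1)
    (hk : 2 * k + 1 ≤ s + 1) : altPowSum Q s (2 * j) < altPowSum Q s (2 * k + 1) := by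
  refine lt_of_mul_lt_mul_left ?_ (by omega : (0 : ℤ) ≤ Q + 1)
  rw [add_one_mul_altPowSum_two_mul hj, add_one_mul_altPowSum_two_mul_add_one hk]
  have := pow_pos hQ (s + 1 - 2 * j)
  have := pow_pos hQ (s - 2 * k)
  linarith

theorem altPowSum_pos (hQ : 2 ≤ Q) {k : ℕ} (hk1 : 1 ≤ k) (hk : k ≤ s + 1) :
    0 < altPowSum Q s k := by
  obtain ⟨j, rfl | rfl⟩ := Nat.even_or_odd' k
  · simpa [altPowSum_zero] using altPowSum_two_mul_lt_two_mul hQ (j := 0) (by omega) hk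
  · simpa [altPowSum_zero] using
      altPowSum_two_mul_lt_two_mul_add_one (by omega) (j := 0) (by omega) hk

theorem altPowSum_lt_altPowSum_two_mul_iff (hQ : 2 ≤ Q) {k t : ℕ} (hk : k ≤ s + 1)
    (ht : 2 * t ≤ s + 1) : altPowSum Q s k < altPowSum Q s (2 * t) ↔ ∃ j < t, k = 2 * j := by
  constructor
  · obtain ⟨j, rfl | rfl⟩ := Nat.even_or_odd' k
    · intro h
      refine ⟨j, ?_, rfl⟩
      by_contra! htj
      rcases htj.eq_or_lt with rfl | htj
      · exact h.false
      · exact (altPowSum_two_mul_lt_two_mul hQ htj hk).not_gt h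
    · exact fun h ↦ ((altPowSum_two_mul_lt_two_mul_add_one (by omega) ht hk).not_gt h).elim
  · rintro ⟨j, hjt, rfl⟩
    exact altPowSum_two_mul_lt_two_mul hQ hjt ht

end altPowSum

theorem Nat.nth_eq_of_strictMonoOn {p : ℕ → Prop} {f : ℕ → ℕ} {n : ℕ}
    (hf : StrictMonoOn f (Set.Iic n)) (hp : ∀ i ≤ n, p (f i))
    (hlt : ∀ w < f n, p w → ∃ i < n, f i = w) : Nat.nth p n = f n := by
  classical
  have hbelow : {w ∈ range (f n) | p w} = (range n).image f := by
    ext w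
    simp only [mem_filter, mem_range, mem_image]
    constructor
    · rintro ⟨hw, hpw⟩
      exact hlt w hw hpw
    · rintro ⟨i, hi, rfl⟩
      exact ⟨hf (Set.mem_Iic.2 hi.le) (Set.mem_Iic.2 le_rfl) hi, hp i hi.le⟩
  have hcount : Nat.count p (f n) = n := by
    rw [Nat.count_eq_card_filter_range, hbelow, Finset.card_image_of_injOn, card_range]
    exact hf.injOn.mono fun i hi ↦ Set.mem_Iic.2 (mem_range.1 hi).le
  simpa [hcount] using Nat.nth_count (hp n le_rfl)

theorem nth_altPowSum {Q : ℤ} (hQ : 2 ≤ Q) {s t : ℕ} (ht : 1 ≤ t) (hts : 2 * t < s) :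
    (Nat.nth (fun w : ℕ ↦ ∃ k, 1 ≤ k ∧ k < s ∧ (w : ℤ) = altPowSum Q s k)
        (t - 1) : ℤ) = altPowSum Q s (2 * t) := by
  set f : ℕ → ℕ := fun i ↦ (altPowSum Q s (2 * (i + 1))).toNat
  have hf : ∀ i, 2 * (i + 1) ≤ s + 1 → (f i : ℤ) = altPowSum Q s (2 * (i + 1)) :=
    fun i hi ↦ Int.toNat_of_nonneg (altPowSum_pos hQ (by omega) hi).le
  have hmono : StrictMonoOn f (Set.Iic (t - 1)) := by
    intro i hi j hj hij
    simp only [Set.mem_Iic] at hi hj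
    have := altPowSum_two_mul_lt_two_mul hQ (s := s) (Nat.succ_lt_succ hij) (by omega)
    exact_mod_cast (hf i (by omega)).trans_lt (this.trans_eq (hf j (by omega)).symm)
  rw [Nat.nth_eq_of_strictMonoOn hmono, hf _ (by omega), Nat.sub_add_cancel ht]
  · intro i hi
    exact ⟨2 * (i + 1), by omega, by omega, hf i (by omega)⟩
  · rintro w hw ⟨k, hk1, hks, hwk⟩
    rw [← Int.ofNat_lt, hf _ (by omega), Nat.sub_add_cancel ht, hwk,
      altPowSum_lt_altPowSum_two_mul_iff hQ (by omega) (by omega)] at hw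
    obtain ⟨j, hjt, rfl⟩ := hw
    refine ⟨j - 1, by omega, ?_⟩
    rw [← Int.ofNat_inj, hf _ (by omega), hwk, show j - 1 + 1 = j by omega]

namespace SimpleGraph

variable {V : Type*} {G : SimpleGraph V}

theorem IsAcyclic.exists_adj_forall_adj_eq [Finite V] (hG : G.IsAcyclic)
    (hne : G.edgeSet.Nonempty) : ∃ u w, G.Adj u w ∧ ∀ w', G.Adj u w' → w' = w := by
  obtain ⟨e, he⟩ := hne
  induction e using Sym2.ind with | _ x y =>
  rw [mem_edgeSet] at he
  have : Nonempty V := ⟨x⟩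
  obtain ⟨u, v, p, hp, hmax⟩ := Walk.exists_isPath_forall_isPath_length_le_length G
  have hnil : ¬p.Nil := fun h ↦ by
    have := hmax x y (.cons he .nil) (by simp [he.ne])
    rw [Walk.length_cons, Walk.length_nil, Walk.length_eq_zero_iff.2 h] at this
    omega
  refine ⟨u, p.snd, p.adj_snd hnil, fun w hw ↦ hG.eq_snd_of_adj_start hp hw ?_⟩
  by_contra hwp
  have := hmax w v (.cons hw.symm p) (hp.cons hwp)
  simp at this

theorem IsAcyclic.card_edgeFinset_lt [Fintype V] [Nonempty V] [Fintype G.edgeSet]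
    (hG : G.IsAcyclic) : G.edgeFinset.card < Fintype.card V := by
  classical
  obtain ⟨T, hGT, -, hT⟩ := connected_top.exists_isTree_le_of_le_of_isAcyclic le_top hG
  have := hT.card_edgeFinset
  have := Finset.card_le_card (edgeFinset_mono hGT)
  omega

theorem IsAcyclic.exists_pendant_edge [Finite V] (hG : G.IsAcyclic) {F : Finset (Sym2 V)}
    (hFG : ↑F ⊆ G.edgeSet) (hF : F.Nonempty) :
    ∃ u w, u ≠ w ∧ s(u, w) ∈ F ∧ ∀ e ∈ F, u ∈ e → e = s(u, w) := by
  have hadj : ∀ {u w}, (fromEdgeSet ↑F).Adj u w ↔ s(u, w) ∈ F :=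
    ⟨fun h ↦ h.1, fun h ↦ ⟨h, G.ne_of_adj (hFG h)⟩⟩
  obtain ⟨e, he⟩ := hF
  have hne : (fromEdgeSet ↑F).edgeSet.Nonempty :=
    ⟨e, by rw [edgeSet_fromEdgeSet]; exact ⟨he, G.not_isDiag_of_mem_edgeSet (hFG he)⟩⟩
  have hle : fromEdgeSet ↑F ≤ G := fun _ _ h ↦ hFG h.1
  obtain ⟨u, w, huw, hleaf⟩ := (hG.anti hle).exists_adj_forall_adj_eq hne
  refine ⟨u, w, G.ne_of_adj (hFG (hadj.1 huw)), hadj.1 huw, fun e he hue ↦ ?_⟩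
  obtain ⟨w', rfl⟩ := Sym2.mem_iff_exists.1 hue
  rw [hleaf w' (hadj.2 he)]

theorem IsAcyclic.card_lt_of_subset_edgeSet [Fintype V] (hG : G.IsAcyclic) {F : Finset (Sym2 V)}
    (hFG : ↑F ⊆ G.edgeSet) (hF : F.Nonempty) : #F < Fintype.card V := by
  classical
  obtain ⟨e, he⟩ := hF
  have : Nonempty V := ⟨(Quot.out e).1⟩
  calc #F ≤ #G.edgeFinset := card_le_card fun e he ↦ mem_edgeFinset.2 (hFG he)
    _ < Fintype.card V := hG.card_edgeFinset_lt

end SimpleGraph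

section Torus

variable {s : ℕ} {K : Type} [Field K]

def Torus.update (P : Torus s K) (v : Fin s) (x : Kˣ) : Torus s K :=
  ⟨Function.update P.1 v x, fun i ↦ by
    rcases eq_or_ne i v with rfl | hi
    · simp
    · simpa [hi] using P.2 i⟩

@[simp] theorem Torus.update_val (P : Torus s K) (v : Fin s) (x : Kˣ) :
    (P.update v x).1 = Function.update P.1 v x := rfl

@[simp] theorem Torus.update_apply_self (P : Torus s K) (v : Fin s) (x : Kˣ) :
    (P.update v x).1 v = x := by
  simp [Torus.update]

@[simp] theorem Torus.update_update (P : Torus s K) (v : Fin s) (x y : Kˣ) :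
    (P.update v x).update v y = P.update v y := by
  simp [Torus.update]

theorem Torus.update_eq_self {P : Torus s K} {v : Fin s} {x : Kˣ} (hx : (x : K) = P.1 v) :
    P.update v x = P := by
  simp [Torus.update, hx]

theorem Torus.nat_card [Finite K] : Nat.card (Torus s K) = Nat.card Kˣ ^ s := by
  rw [Nat.card_congr (Equiv.subtypePiEquivPi.trans (Equiv.piCongrRight fun _ ↦
    unitsEquivNeZero.symm)), Nat.card_pi, Finset.prod_const, Finset.card_univ, Fintype.card_fin]

theorem wt_add_card_zeros [Finite K] (c : Torus s K → K) :
    wt c + Nat.card {P // c P = 0} = Nat.card Kˣ ^ s := by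
  rw [wt, ← Torus.nat_card, ← Set.ncard_add_ncard_compl {P | c P ≠ 0},
    ← Nat.card_coe_set_eq, ← Nat.card_coe_set_eq]
  simp only [Set.compl_ofPred, not_not]
  rfl

theorem card_units_mul_wt_add_wt [Finite K] {v : Fin s} {a g : Torus s K → K}
    (ha : ∀ P, a P ≠ 0) (hav : ∀ P x, a (P.update v x) = a P)
    (hgv : ∀ P x, g (P.update v x) = g P) :
    Nat.card Kˣ * wt (fun P ↦ a P * P.1 v + g P) + wt g = Nat.card Kˣ ^ (s + 1) := by
  have hsolve : ∀ P, g P ≠ 0 → -g P / a P ≠ 0 :=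
    fun P hP ↦ div_ne_zero (neg_ne_zero.2 hP) (ha P)
  -- `(P, x) ↦ P` with `v`-th coordinate `x`; the inverse recovers the zero by solving
  -- `a P * y + g P = 0` for its `v`-th coordinate `y`.
  let e : {P // a P * P.1 v + g P = 0} × Kˣ ≃ {P // g P ≠ 0} :=
    { toFun := fun Px ↦ ⟨Px.1.1.update v Px.2, by
        rw [hgv, eq_neg_of_add_eq_zero_right Px.1.2, neg_ne_zero]
        exact mul_ne_zero (ha _) (Px.1.1.2 v)⟩
      invFun := fun P ↦ (⟨P.1.update v (Units.mk0 _ (hsolve P P.2)), by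
          rw [hav, hgv, Torus.update_apply_self, Units.val_mk0, mul_div_cancel₀ _ (ha P)]
          ring⟩,
        Units.mk0 (P.1.1 v) (P.1.2 v))
      left_inv := fun ⟨⟨P, hP⟩, x⟩ ↦ by
        refine Prod.ext (Subtype.ext ?_) (Units.ext (by simp))
        dsimp only
        rw [Torus.update_update, Torus.update_eq_self]
        rw [Units.val_mk0, hav, hgv, div_eq_iff (ha P)]
        linear_combination -hP
      right_inv := fun ⟨P, hP⟩ ↦ by
        refine Subtype.ext ?_
        dsimp only
        rw [Torus.update_update]
        exact Torus.update_eq_self (Units.val_mk0 _) }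
  have hzeros : Nat.card {P // a P * P.1 v + g P = 0} * Nat.card Kˣ = wt g := by
    rw [← Nat.card_prod, Nat.card_congr e, wt, ← Nat.card_coe_set_eq]
    rfl
  have := wt_add_card_zeros (fun P ↦ a P * P.1 v + g P)
  rw [← hzeros, pow_succ', ← this]
  ring

end Torus

section EdgeCode

variable {s : ℕ} {K : Type} [Field K]

noncomputable def edgeCodeword (F : Finset (Sym2 (Fin s))) (c : Sym2 (Fin s) → K) :
    Torus s K → K :=
  evalTorus s K (∑ e ∈ F, c e • edgeMonSym2 s K e)

theorem edgeCodeword_apply (F : Finset (Sym2 (Fin s))) (c : Sym2 (Fin s) → K) (P : Torus s K) :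
    edgeCodeword F c P = ∑ e ∈ F, c e * eval P.1 (edgeMonSym2 s K e) := by
  simp [edgeCodeword, evalTorus]

theorem edgeCodeword_mem_graphCode {G : SimpleGraph (Fin s)} {F : Finset (Sym2 (Fin s))}
    (hFG : ↑F ⊆ G.edgeSet) (c : Sym2 (Fin s) → K) : edgeCodeword F c ∈ graphCode s K G :=
  Submodule.mem_map_of_mem <| Submodule.sum_mem _ fun e he ↦
    Submodule.smul_mem _ _ (Submodule.subset_span ⟨e, hFG he, rfl⟩)

theorem exists_edgeCodeword_of_mem_graphCode {G : SimpleGraph (Fin s)} {x : Torus s K → K}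
    (hx : x ∈ graphCode s K G) :
    ∃ F : Finset (Sym2 (Fin s)), ↑F ⊆ G.edgeSet ∧ ∃ c : Sym2 (Fin s) → K,
      (∀ e ∈ F, c e ≠ 0) ∧ edgeCodeword F c = x := by
  obtain ⟨f, hf, rfl⟩ := Submodule.mem_map.1 hx
  obtain ⟨l, hl, rfl⟩ := (Finsupp.mem_span_image_iff_linearCombination K).1 hf
  exact ⟨l.support, (Finsupp.mem_supported K l).1 hl, l, fun e ↦ Finsupp.mem_support_iff.1,
    by rw [Finsupp.linearCombination_apply, Finsupp.sum]; rfl⟩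

@[simp] theorem eval_edgeMonSym2_mk (x : Fin s → K) (i j : Fin s) :
    eval x (edgeMonSym2 s K s(i, j)) = x i * x j := by
  simp [edgeMonSym2]

theorem eval_update_edgeMonSym2 (x : Fin s → K) {v : Fin s} (y : K) {e : Sym2 (Fin s)}
    (hv : v ∉ e) :
    eval (Function.update x v y) (edgeMonSym2 s K e) = eval x (edgeMonSym2 s K e) := by
  induction e using Sym2.ind with | _ i j =>
  simp only [Sym2.mem_iff, not_or] at hv
  simp [Function.update_of_ne (Ne.symm hv.1), Function.update_of_ne (Ne.symm hv.2)]

theorem wt_edgeCodeword [Finite K] {G : SimpleGraph (Fin s)} (hG : G.IsAcyclic)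
    {F : Finset (Sym2 (Fin s))} (hFG : ↑F ⊆ G.edgeSet) {c : Sym2 (Fin s) → K}
    (hc : ∀ e ∈ F, c e ≠ 0) :
    (wt (edgeCodeword F c) : ℤ) = altPowSum (Nat.card Kˣ) s #F := by
  induction F using Finset.strongInduction with | H F ih =>
  rcases F.eq_empty_or_nonempty with rfl | hF
  · simp [edgeCodeword, wt, altPowSum_zero]
  obtain ⟨u, w, huw, huwF, hleaf⟩ := hG.exists_pendant_edge hFG hF
  set F' := F.erase s(u, w)
  have hF' := ih F' (erase_ssubset huwF) ((coe_subset.2 (erase_subset _ _)).trans hFG)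
    fun e he ↦ hc e (mem_of_mem_erase he)
  have hsplit : edgeCodeword F c = fun P ↦ c s(u, w) * P.1 w * P.1 u + edgeCodeword F' c P := by
    funext P
    rw [edgeCodeword_apply, edgeCodeword_apply, ← add_sum_erase F _ huwF, eval_edgeMonSym2_mk]
    ring
  have hstep := card_units_mul_wt_add_wt (v := u) (a := fun P ↦ c s(u, w) * P.1 w)
    (g := edgeCodeword F' c) (fun P ↦ mul_ne_zero (hc _ huwF) (P.2 w))
    (fun P x ↦ by simp [Function.update_of_ne huw.symm])
    (fun P x ↦ by
      simp only [edgeCodeword_apply, Torus.update_val]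
      refine sum_congr rfl fun e he ↦ ?_
      rw [eval_update_edgeMonSym2]
      exact fun hue ↦ ne_of_mem_erase he (hleaf e (mem_of_mem_erase he) hue))
  have hcard : #F = #F' + 1 := (card_erase_add_one huwF).symm
  have hF's : #F' ≤ s := by
    have := hG.card_lt_of_subset_edgeSet hFG ⟨_, huwF⟩
    rw [Fintype.card_fin] at this
    omega
  have hrec := mul_altPowSum_succ_add_altPowSum (Nat.card Kˣ : ℤ) hF's
  have hstep' := congrArg (Nat.cast : ℕ → ℤ) hstep
  push_cast at hstep'
  rw [hsplit, hcard]
  refine mul_left_cancel₀ (Nat.cast_ne_zero.2 Nat.card_pos.ne' : (Nat.card Kˣ : ℤ) ≠ 0) ?_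
  linear_combination hstep' - hrec - hF'

theorem exists_wt_eq_altPowSum_of_mem_graphCode [Finite K] {G : SimpleGraph (Fin s)}
    (hG : G.IsAcyclic) {x : Torus s K → K} (hx : x ∈ graphCode s K G) (hx0 : x ≠ 0) :
    ∃ k, 1 ≤ k ∧ k < s ∧ (wt x : ℤ) = altPowSum (Nat.card Kˣ) s k := by
  obtain ⟨F, hFG, c, hc, rfl⟩ := exists_edgeCodeword_of_mem_graphCode hx
  have hF : F.Nonempty := by
    rw [nonempty_iff_ne_empty]
    rintro rfl
    simp [edgeCodeword] at hx0
  refine ⟨#F, card_pos.2 hF, ?_, wt_edgeCodeword hG hFG hc⟩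
  simpa using hG.card_lt_of_subset_edgeSet hFG hF

theorem exists_mem_graphCode_wt_eq_altPowSum [Finite K] (hK : 2 ≤ Nat.card Kˣ)
    {G : SimpleGraph (Fin s)} (hG : G.IsTree) {k : ℕ} (hk1 : 1 ≤ k) (hks : k < s) :
    ∃ x ∈ graphCode s K G, x ≠ 0 ∧ (wt x : ℤ) = altPowSum (Nat.card Kˣ) s k := by
  classical
  have hk : k ≤ #G.edgeFinset := by
    have := hG.card_edgeFinset
    rw [Fintype.card_fin] at this
    omega
  obtain ⟨F, hFG, rfl⟩ := exists_subset_card_eq hk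
  have hFG' : ↑F ⊆ G.edgeSet := fun e he ↦ SimpleGraph.mem_edgeFinset.1 (hFG he)
  have hwt := wt_edgeCodeword (c := fun _ ↦ (1 : K)) hG.isAcyclic hFG' fun _ _ ↦ one_ne_zero
  refine ⟨_, edgeCodeword_mem_graphCode hFG' _, fun h0 ↦ ?_, hwt⟩
  have := altPowSum_pos (Q := Nat.card Kˣ) (s := s) (by exact_mod_cast hK) hk1 (by omega)
  simp [h0, wt] at hwt
  omega

theorem exists_mem_graphCode_wt_eq_iff [Finite K] (hK : 2 ≤ Nat.card Kˣ)
    {G : SimpleGraph (Fin s)} (hG : G.IsTree) (w : ℕ) :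
    (∃ x ∈ graphCode s K G, x ≠ 0 ∧ wt x = w) ↔
      ∃ k, 1 ≤ k ∧ k < s ∧ (w : ℤ) = altPowSum (Nat.card Kˣ) s k := by
  constructor
  · rintro ⟨x, hx, hx0, rfl⟩
    exact exists_wt_eq_altPowSum_of_mem_graphCode hG.isAcyclic hx hx0
  · rintro ⟨k, hk1, hks, hw⟩
    obtain ⟨x, hx, hx0, hwt⟩ := exists_mem_graphCode_wt_eq_altPowSum hK hG hk1 hks
    exact ⟨x, hx, hx0, by omega⟩

end EdgeCode

theorem edgeCode_tree_hamming_weights_general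
    (q s t : ℕ) (hq : 3 ≤ q)
    (K : Type) [Field K] [Fintype K] (hK : Fintype.card K = q)
    (G : SimpleGraph (Fin s)) (hG : G.IsTree)
    (ht1 : 1 ≤ t) (ht2 : 2 * t + 1 ≤ s) :
    (Nat.nth
        (fun w => w ∈ {w : ℕ | ∃ c ∈ graphCode s K G, c ≠ 0 ∧ wt c = w}) (t - 1) : ℤ)
      = ∑ i ∈ Finset.range (2 * t), (-1) ^ i * ((q : ℤ) - 1) ^ (s - i) := by
  classical
  have hunits : Nat.card Kˣ = q - 1 := by
    rw [Nat.card_eq_fintype_card, Fintype.card_units, hK]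
  have hweights : (fun w ↦ w ∈ {w : ℕ | ∃ c ∈ graphCode s K G, c ≠ 0 ∧ wt c = w}) =
      fun w : ℕ ↦ ∃ k, 1 ≤ k ∧ k < s ∧ (w : ℤ) = altPowSum (Nat.card Kˣ) s k :=
    funext fun w ↦ propext (exists_mem_graphCode_wt_eq_iff (by omega) hG w)
  rw [hweights, nth_altPowSum (by omega) ht1 (by omega), altPowSum, hunits,
    Nat.cast_sub (by omega), Nat.cast_one]

/-- let `q ≥ 3` and let `G` be a connected tree on `{1,…,s}`, `s ≥ 3`.
For `1 ≤ t ≤ (s-1)/2`, the `t`-th smallest Hamming weight of a nonzero codeword of the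
edge code `C_G` equals `Σ_{i=0}^{2t-1} (-1)^i (q-1)^{s-i}`. -/
theorem edgeCode_tree_hamming_weights
    (q s t : ℕ) (hq : 3 ≤ q) (hs : 3 ≤ s)
    (K : Type) [Field K] [Fintype K] (hK : Fintype.card K = q)
    (G : SimpleGraph (Fin s)) (hG : G.IsTree)
    (ht1 : 1 ≤ t) (ht2 : 2 * t + 1 ≤ s) :
    (Nat.nth
        (fun w => w ∈ {w : ℕ | ∃ c ∈ graphCode s K G, c ≠ 0 ∧ wt c = w}) (t - 1) : ℤ)
      = ∑ i ∈ Finset.range (2 * t), (-1) ^ i * ((q : ℤ) - 1) ^ (s - i) :=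
  edgeCode_tree_hamming_weights_general q s t hq K hK G hG ht1 ht2
end

section
/- Let q ≥ 3 and let d be an integer with s/2 < d < s. Let f ∈ S be a nonzero homogeneous polynomial of degree d all of whose monomials are squarefree. Then the number of zeros of f in the affine torus satisfies |V_T(f)| ≤ (q−1)^s − (q−2)^{s−d} (q−1)^d. -/
open MvPolynomial

/-! Split off the first variable: `g(a, p) = g₀(p) + g₁(p) a`. Over a point `p` with
`g₀(p) ≠ 0` at most one `a ∈ S` is a zero of `g`; if `g₀ = 0`, then over a point with
`g₁(p) ≠ 0` no `a ∈ S` is, because `0 ∉ S`. As the monomials of `g₁` have degree one less than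
those of `g`, induction on the number `n` of variables shows that a nonzero squarefree `g` whose
monomials all have degree `≥ k` has at least `(|S| - 1)^(n - k) |S|^k` nonzeros on `Sⁿ`.
Taking `S = K*` and `k = d` bounds the number of nonzeros of `f` on the torus below by
`(q - 2)^(s - d) (q - 1)^d`. -/

open Finset Fintype

theorem Finset.card_filter_piFinset_succ {α : Type*} {n : ℕ} (S : Finset α)
    (Q : (Fin (n + 1) → α) → Prop) [DecidablePred Q] :
    #{P ∈ piFinset fun _ => S | Q P} =
      ∑ p ∈ piFinset fun _ : Fin n => S, #{a ∈ S | Q (Fin.cons a p)} := by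
  have h := filter_piFinset_eq_map_consEquiv (fun _ : Fin (n + 1) => S) (fun _ => True)
  rw [filter_true, filter_true] at h
  rw [h, filter_map, card_map, card_filter, sum_product_right]
  simp_rw [card_filter]
  rfl

theorem Finsupp.degree_cons {n : ℕ} (m : Fin n →₀ ℕ) (j : ℕ) :
    (m.cons j).degree = j + m.degree := by
  simp [Finsupp.degree_eq_sum, Fin.sum_univ_succ]

theorem Finsupp.degree_le_card_of_forall_le_one {σ : Type*} [Fintype σ] {m : σ →₀ ℕ}
    (hm : ∀ i, m i ≤ 1) : m.degree ≤ Fintype.card σ := by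
  simpa [Finsupp.degree_eq_sum] using Finset.sum_le_sum fun i (_ : i ∈ univ) => hm i

theorem Nat.sub_one_pow_mul_pow_le_mul (x n k : ℕ) :
    (x - 1) ^ (n + 1 - k) * x ^ k ≤ x * ((x - 1) ^ (n - (k - 1)) * x ^ (k - 1)) := by
  rcases k with _ | k
  · calc (x - 1) ^ (n + 1) * x ^ 0 = (x - 1) ^ n * (x - 1) := by ring
      _ ≤ (x - 1) ^ n * x := Nat.mul_le_mul_left _ (Nat.sub_le _ _)
      _ = _ := by rw [Nat.zero_sub, Nat.sub_zero, pow_zero, mul_one, mul_comm]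
  · rw [Nat.add_sub_add_right, Nat.add_sub_cancel, pow_succ]
    exact (by ring : _ = _).le

section Domain

variable {R : Type*} [CommRing R] [IsDomain R] [DecidableEq R]

theorem Finset.card_sub_one_le_card_filter_add_mul_ne_zero (S : Finset R) {b : R} (hb : b ≠ 0)
    (c : R) : #S - 1 ≤ #{a ∈ S | b + c * a ≠ 0} := by
  have hroot : #{a ∈ S | b + c * a = 0} ≤ 1 := by
    refine card_le_one.mpr fun a₁ ha₁ a₂ ha₂ => ?_
    rw [mem_filter] at ha₁ ha₂
    have hc : c ≠ 0 := by rintro rfl; simp [hb] at ha₁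
    exact mul_left_cancel₀ hc (by linear_combination ha₁.2 - ha₂.2)
  have := card_filter_add_card_filter_not (s := S) (fun a => b + c * a = 0)
  simp only [← ne_eq] at this
  omega

theorem Finset.card_sub_one_mul_card_filter_le_sum {ι : Type*} (S : Finset R) (T : Finset ι)
    (u v : ι → R) :
    (#S - 1) * #{p ∈ T | u p ≠ 0} ≤ ∑ p ∈ T, #{a ∈ S | u p + v p * a ≠ 0} :=
  calc (#S - 1) * #{p ∈ T | u p ≠ 0} = ∑ p ∈ T with u p ≠ 0, (#S - 1) := by
        rw [sum_const, smul_eq_mul, mul_comm]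
    _ ≤ ∑ p ∈ T with u p ≠ 0, #{a ∈ S | u p + v p * a ≠ 0} :=
        sum_le_sum fun p hp => card_sub_one_le_card_filter_add_mul_ne_zero S (mem_filter.1 hp).2 _
    _ ≤ ∑ p ∈ T, #{a ∈ S | u p + v p * a ≠ 0} := sum_le_sum_of_subset (filter_subset _ _)

theorem Finset.card_mul_card_filter_eq_sum {ι : Type*} {S : Finset R} (hS : 0 ∉ S)
    (T : Finset ι) (v : ι → R) :
    #S * #{p ∈ T | v p ≠ 0} = ∑ p ∈ T, #{a ∈ S | v p * a ≠ 0} :=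
  calc #S * #{p ∈ T | v p ≠ 0} = ∑ p ∈ T with v p ≠ 0, #S := by
        rw [sum_const, smul_eq_mul, mul_comm]
    _ = ∑ p ∈ T with v p ≠ 0, #{a ∈ S | v p * a ≠ 0} := sum_congr rfl fun p hp => by
        rw [filter_true_of_mem fun a ha =>
          mul_ne_zero (mem_filter.1 hp).2 (ne_of_mem_of_not_mem ha hS)]
    _ = ∑ p ∈ T, #{a ∈ S | v p * a ≠ 0} := sum_filter_of_ne fun p _ h hv => h (by simp [hv])

end Domain

namespace MvPolynomial

section CommSemiring

variable {R : Type*} [CommSemiring R] {n : ℕ} {g : MvPolynomial (Fin (n + 1)) R}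

theorem eval_cons_eq_of_degreeOf_zero_le_one (hg : degreeOf 0 g ≤ 1) (a : R) (p : Fin n → R) :
    eval (Fin.cons a p) g =
      eval p ((finSuccEquiv R n g).coeff 0) + eval p ((finSuccEquiv R n g).coeff 1) * a := by
  have hdeg : ((finSuccEquiv R n g).map (eval p)).natDegree ≤ 1 :=
    Polynomial.natDegree_map_le.trans ((natDegree_finSuccEquiv g).trans_le hg)
  rw [eval_eq_eval_mv_eval', Polynomial.eq_X_add_C_of_natDegree_le_one hdeg]
  simp only [Polynomial.eval_add, Polynomial.eval_mul, Polynomial.eval_C, Polynomial.eval_X,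
    Polynomial.coeff_map]
  ring

theorem coeff_one_finSuccEquiv_ne_zero (hg : g ≠ 0) (hdeg : degreeOf 0 g ≤ 1)
    (h0 : (finSuccEquiv R n g).coeff 0 = 0) : (finSuccEquiv R n g).coeff 1 ≠ 0 := by
  intro h1
  have hF := Polynomial.eq_X_add_C_of_natDegree_le_one ((natDegree_finSuccEquiv g).trans_le hdeg)
  rw [h0, h1, map_zero, zero_mul, zero_add] at hF
  exact hg ((EmbeddingLike.map_eq_zero_iff).1 hF)

end CommSemiring

variable {R : Type*} [CommRing R] [IsDomain R] [DecidableEq R] {S : Finset R}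

theorem pow_mul_pow_le_card_filter_eval_ne_zero (hS : 0 ∉ S) {n k : ℕ}
    {g : MvPolynomial (Fin n) R} (hg : g ≠ 0) (hsq : ∀ m ∈ g.support, ∀ i, m i ≤ 1)
    (hk : ∀ m ∈ g.support, k ≤ m.degree) :
    (#S - 1) ^ (n - k) * #S ^ k ≤ #{P ∈ piFinset fun _ => S | eval P g ≠ 0} := by
  induction n generalizing k with
  | zero =>
    obtain ⟨c, rfl⟩ := C_surjective (Fin 0) g
    have hc : c ≠ 0 := by rintro rfl; exact hg C_0
    obtain rfl : k = 0 := Nat.le_zero.1 (by simpa using hk 0 (by simp [support_C, hc]))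
    simp [hc]
  | succ n ih =>
    have hdeg : degreeOf 0 g ≤ 1 := degreeOf_le_iff.2 fun m hm => hsq m hm 0
    rw [card_filter_piFinset_succ]
    simp_rw [eval_cons_eq_of_degreeOf_zero_le_one hdeg]
    set F := finSuccEquiv R n g
    have hsqF : ∀ j, ∀ m ∈ (F.coeff j).support, ∀ i, m i ≤ 1 := fun j m hm i => by
      simpa using hsq _ (mem_support_coeff_finSuccEquiv.1 hm) i.succ
    have hkF : ∀ j, ∀ m ∈ (F.coeff j).support, k ≤ j + m.degree := fun j m hm => by
      simpa [Finsupp.degree_cons] using hk _ (mem_support_coeff_finSuccEquiv.1 hm)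
    by_cases h0 : F.coeff 0 = 0
    · have hIH := ih (k := k - 1) (coeff_one_finSuccEquiv_ne_zero hg hdeg h0) (hsqF 1)
        fun m hm => by have := hkF 1 m hm; omega
      simp only [h0, map_zero, zero_add]
      rw [← card_mul_card_filter_eq_sum hS]
      exact (Nat.sub_one_pow_mul_pow_le_mul _ n k).trans (Nat.mul_le_mul_left _ hIH)
    · obtain ⟨m, hm⟩ := support_nonempty.2 h0
      have hkn : k ≤ n := calc
        k ≤ m.degree := by simpa using hkF 0 m hm
        _ ≤ n := by simpa using Finsupp.degree_le_card_of_forall_le_one (hsqF 0 m hm)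
      calc (#S - 1) ^ (n + 1 - k) * #S ^ k = (#S - 1) * ((#S - 1) ^ (n - k) * #S ^ k) := by
            rw [Nat.sub_add_comm hkn, pow_succ]; ring
        _ ≤ (#S - 1) * #{p ∈ piFinset fun _ => S | eval p (F.coeff 0) ≠ 0} :=
            Nat.mul_le_mul_left _ (ih h0 (hsqF 0) fun m hm => by simpa using hkF 0 m hm)
        _ ≤ _ := card_sub_one_mul_card_filter_le_sum _ _ _ _

end MvPolynomial

theorem ncard_setOf_torus {s : ℕ} {K : Type} [Field K] [Fintype K] [DecidableEq K]
    (p : (Fin s → K) → Prop) [DecidablePred p] :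
    {P : Torus s K | p P.1}.ncard = #{P ∈ piFinset fun _ => univ.erase (0 : K) | p P} := by
  rw [← Set.ncard_image_of_injective _ Subtype.val_injective, ← Set.ncard_coe_finset]
  congr 1
  ext P
  simp [Fintype.mem_piFinset, and_comm]

theorem card_zeros_homogeneous_squarefree_le_general
    (q s d : ℕ)
    (K : Type) [Field K] [Fintype K] (hK : Fintype.card K = q)
    (f : MvPolynomial (Fin s) K) (hf0 : f ≠ 0)
    (hhom : f.IsHomogeneous d)
    (hsquarefree : ∀ m ∈ f.support, ∀ i, m i ≤ 1) :
    {P : Torus s K | eval P.1 f = 0}.ncard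
      ≤ (q - 1) ^ s - (q - 2) ^ (s - d) * (q - 1) ^ d := by
  classical
  have hcard : #(univ.erase (0 : K)) = q - 1 := by
    rw [card_erase_of_mem (mem_univ 0), card_univ, hK]
  have hnonzeros := pow_mul_pow_le_card_filter_eval_ne_zero (k := d) (notMem_erase 0 univ) hf0
    hsquarefree fun m hm => by
      simpa [Finsupp.degree_eq_weight_one, Pi.one_def] using (hhom (mem_support_iff.1 hm)).ge
  have htorus := card_filter_add_card_filter_not
    (s := piFinset fun _ : Fin s => univ.erase (0 : K)) (fun P => eval P f = 0)
  simp only [← ne_eq, card_piFinset_const, hcard, Nat.sub_sub, Nat.reduceAdd] at hnonzeros htorus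
  rw [ncard_setOf_torus fun P => eval P f = 0]
  omega

/-- for `q ≥ 3` and `s/2 < d < s`, a nonzero homogeneous polynomial `f`
of degree `d` all of whose monomials are squarefree has at most
`(q-1)^s - (q-2)^{s-d} (q-1)^d` zeros in the affine torus. -/
theorem card_zeros_homogeneous_squarefree_le
    (q s d : ℕ) (hq : 3 ≤ q) (hlow : s < 2 * d) (hhigh : d < s)
    (K : Type) [Field K] [Fintype K] (hK : Fintype.card K = q)
    (f : MvPolynomial (Fin s) K) (hf0 : f ≠ 0)
    (hhom : f.IsHomogeneous d)
    (hsquarefree : ∀ m ∈ f.support, ∀ i, m i ≤ 1) :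
    {P : Torus s K | eval P.1 f = 0}.ncard
      ≤ (q - 1) ^ s - (q - 2) ^ (s - d) * (q - 1) ^ d :=
  card_zeros_homogeneous_squarefree_le_general q s d K hK f hf0 hhom hsquarefree
end

section
/- Let r be an integer with 2 ≤ r ≤ s, let i_1,…,i_r be distinct indices in {1,…,s}, let α_1,…,α_r be nonzero elements of K, and set f = α_1 t_{i_1} + ⋯ + α_r t_{i_r}. Then the number of zeros of f in the affine torus is |V_T(f)| = (q−1)^{s−1} − (q−1)^{s−2} + ⋯ + (−1)^r (q−1)^{s−(r−1)}, i.e. |V_T(f)| = Σ_{i=1}^{r−1} (−1)^{i−1} (q−1)^{s−i}. -/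
open MvPolynomial

/-!
Let `N(β)` be the number of points of the torus `(K*)ⁿ` where `∑ βᵢ tᵢ` vanishes. Split off the
first coordinate `u`. If its coefficient is zero, `u` is free, so `N` gets multiplied by `q - 1`.
If it is `b ≠ 0`, then `u = -b⁻¹ ∑ βᵢ tᵢ` is determined by the other coordinates, and it is a
unit exactly when the remaining form does not vanish, so `N(b, β) = (q - 1)ⁿ - N(β)`. By induction,
`q N(β) = (q - 1)ⁿ + (-1)ᵏ (q - 1)ᵐ⁺¹` when `β` has `k` nonzero and `m` zero coefficients. The
form of the theorem, read in all `s` variables, has `k = r` and `m = s - r`, and the alternating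
sum is exactly this quantity divided by `q`.
-/

open Finset

theorem sum_extend_mul {κ σ R : Type*} [Fintype κ] [Fintype σ] [Semiring R]
    {ι : κ → σ} (hι : Function.Injective ι) (α : κ → R) (x : σ → R) :
    ∑ j, Function.extend ι α 0 j * x j = ∑ i, α i * x (ι i) :=
  (Fintype.sum_of_injective ι hι _ _ (fun j hj => by simp [Function.extend_apply' _ _ _ hj])
    (fun i => by rw [hι.extend_apply])).symm

theorem card_filter_extend_ne_zero {κ σ M : Type*} [Fintype κ] [Fintype σ] [Zero M]
    [DecidableEq M] {ι : κ → σ} (hι : Function.Injective ι) {α : κ → M} (hα : ∀ i, α i ≠ 0) :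
    #{j | Function.extend ι α 0 j ≠ 0} = Fintype.card κ := by
  have : ({j | Function.extend ι α 0 j ≠ 0} : Finset σ) = univ.map ⟨ι, hι⟩ := by
    ext j
    by_cases hj : ∃ i, ι i = j
    · obtain ⟨i, rfl⟩ := hj
      simp [hι.extend_apply, hα]
    · simp [hj]
  rw [this, card_map, card_univ]

theorem card_filter_extend_eq_zero {κ σ M : Type*} [Fintype κ] [Fintype σ] [Zero M]
    [DecidableEq M] {ι : κ → σ} (hι : Function.Injective ι) {α : κ → M} (hα : ∀ i, α i ≠ 0) :
    #{j | Function.extend ι α 0 j = 0} = Fintype.card σ - Fintype.card κ := by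
  have := card_filter_add_card_filter_not (s := univ) fun j => Function.extend ι α 0 j = 0
  have hne := card_filter_extend_ne_zero hι hα
  rw [card_univ] at this
  simp only [ne_eq] at hne
  omega

theorem add_one_mul_sum_range_neg_one_pow_mul_pow {R : Type*} [CommRing R] (x : R) {n s : ℕ}
    (h : n + 1 ≤ s) :
    (x + 1) * ∑ i ∈ range n, (-1) ^ i * x ^ (s - (i + 1))
      = x ^ s + (-1) ^ (n + 1) * x ^ (s - n) := by
  induction n with
  | zero => simp
  | succ n ih =>
    have hs : s - n = s - (n + 1) + 1 := by omega
    rw [sum_range_succ, mul_add, ih (by omega), hs]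
    ring

section TorusZeros

variable {K : Type} [Field K]

noncomputable def numTorusZeros {n : ℕ} (β : Fin n → K) : ℕ :=
  Nat.card {y : Fin n → Kˣ // ∑ i, β i * y i = 0}

variable [DecidableEq K]

theorem natCard_units_zero_mul_add_eq_zero (c : K) :
    Nat.card {u : Kˣ // 0 * u + c = 0} = if c = 0 then Nat.card Kˣ else 0 := by
  split_ifs with hc <;> simp [hc]

theorem natCard_units_mul_add_eq_zero {b : K} (hb : b ≠ 0) (c : K) :
    Nat.card {u : Kˣ // b * u + c = 0} = if c = 0 then 0 else 1 := by
  split_ifs with hc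
  · simp [hc, hb]
  · rw [Nat.card_eq_one_iff_exists]
    refine ⟨⟨Units.mk0 (-c / b) (by simp [hb, hc]), by simp only [Units.val_mk0]; field_simp; ring⟩,
      ?_⟩
    rintro ⟨u, hu⟩
    ext
    simp only [Units.val_mk0]
    field_simp
    linear_combination hu

variable [Fintype K]

theorem numTorusZeros_eq_card_filter {n : ℕ} (β : Fin n → K) :
    numTorusZeros β = #{y : Fin n → Kˣ | ∑ i, β i * y i = 0} := by
  rw [numTorusZeros, Nat.card_eq_fintype_card, Fintype.card_subtype]

theorem numTorusZeros_cons {n : ℕ} (b : K) (β : Fin n → K) :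
    numTorusZeros (Fin.cons b β : Fin (n + 1) → K)
      = ∑ z : Fin n → Kˣ, Nat.card {u : Kˣ // b * u + ∑ i, β i * z i = 0} := by
  simp only [numTorusZeros_eq_card_filter, Nat.card_eq_fintype_card, Fintype.card_subtype,
    card_filter]
  rw [← (Fin.consEquiv fun _ => Kˣ).sum_comp, Fintype.sum_prod_type_right]
  simp [Fin.sum_univ_succ]

theorem numTorusZeros_cons_zero {n : ℕ} (β : Fin n → K) :
    numTorusZeros (Fin.cons 0 β : Fin (n + 1) → K) = Nat.card Kˣ * numTorusZeros β := by
  rw [numTorusZeros_cons, numTorusZeros_eq_card_filter]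
  simp only [natCard_units_zero_mul_add_eq_zero]
  rw [← sum_filter, sum_const, smul_eq_mul, mul_comm]

theorem numTorusZeros_cons_add {n : ℕ} {b : K} (hb : b ≠ 0) (β : Fin n → K) :
    numTorusZeros (Fin.cons b β : Fin (n + 1) → K) + numTorusZeros β = Nat.card Kˣ ^ n := by
  rw [numTorusZeros_cons, numTorusZeros_eq_card_filter]
  simp only [natCard_units_mul_add_eq_zero hb, ← ite_not _ 1 0, ← card_filter]
  rw [add_comm, card_filter_add_card_filter_not, card_univ, Fintype.card_fun, Fintype.card_fin,
    Nat.card_eq_fintype_card]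

theorem intCast_natCard_units : (Nat.card Kˣ : ℤ) = Fintype.card K - 1 := by
  rw [Nat.card_eq_fintype_card, Fintype.card_units, Nat.cast_sub Fintype.card_pos, Nat.cast_one]

theorem card_mul_numTorusZeros {n : ℕ} (β : Fin n → K) :
    (Fintype.card K : ℤ) * numTorusZeros β
      = (Fintype.card K - 1) ^ n
        + (-1) ^ #{i | β i ≠ 0} * (Fintype.card K - 1) ^ (#{i | β i = 0} + 1) := by
  induction n with
  | zero => simp [numTorusZeros]
  | succ n ih =>
    obtain ⟨b, β, rfl⟩ : ∃ b β', β = Fin.cons b β' :=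
      ⟨β 0, Fin.tail β, (Fin.cons_self_tail β).symm⟩
    simp only [Fin.card_filter_univ_succ', Fin.cons_zero, Fin.cons_succ]
    by_cases hb : b = 0
    · rw [hb, numTorusZeros_cons_zero]
      push_cast
      simp only [ne_eq, not_true_eq_false, if_false, if_true, intCast_natCard_units]
      linear_combination (Fintype.card K - 1 : ℤ) * ih β
    · have hrec := congrArg (Nat.cast : ℕ → ℤ) (numTorusZeros_cons_add hb β)
      push_cast [intCast_natCard_units] at hrec
      simp only [ne_eq, hb, not_false_eq_true, if_false, if_true]
      linear_combination (Fintype.card K : ℤ) * hrec - ih β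

end TorusZeros

def torusEquivUnits (s : ℕ) (K : Type) [Field K] : Torus s K ≃ (Fin s → Kˣ) :=
  Equiv.subtypePiEquivPi.trans (Equiv.piCongrRight fun _ => unitsEquivNeZero.symm)

theorem ncard_torus_zeros_eq_numTorusZeros {K : Type} [Field K] {r s : ℕ} {ι : Fin r → Fin s}
    (hι : Function.Injective ι) (α : Fin r → K) :
    {P : Torus s K | eval P.1 (∑ i, C (α i) * X (ι i)) = 0}.ncard
      = numTorusZeros (Function.extend ι α 0) := by
  rw [← Nat.card_coe_set_eq, numTorusZeros]
  refine Nat.card_congr ((torusEquivUnits s K).subtypeEquiv fun P => ?_)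
  simp [sum_extend_mul hι, torusEquivUnits, Equiv.subtypePiEquivPi]

theorem card_zeros_linear_form_general
    (q s r : ℕ) (hr2 : 2 ≤ r)
    (K : Type) [Field K] [Fintype K] (hK : Fintype.card K = q)
    (ι : Fin r → Fin s) (hι : Function.Injective ι)
    (α : Fin r → K) (hα : ∀ i, α i ≠ 0) :
    ({P : Torus s K | eval P.1 (∑ i, C (α i) * X (ι i)) = 0}.ncard : ℤ)
      = ∑ i ∈ Finset.range (r - 1), (-1) ^ i * ((q : ℤ) - 1) ^ (s - (i + 1)) := by
  classical
  subst hK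
  have hrs : r ≤ s := by simpa using Fintype.card_le_of_injective ι hι
  obtain ⟨n, rfl⟩ : ∃ n, r = n + 1 := ⟨r - 1, by omega⟩
  have hq : (Fintype.card K : ℤ) ≠ 0 := by exact_mod_cast Fintype.card_ne_zero
  have hexp : s - (n + 1) + 1 = s - n := by omega
  have hsum := add_one_mul_sum_range_neg_one_pow_mul_pow ((Fintype.card K : ℤ) - 1) hrs
  rw [sub_add_cancel] at hsum
  apply mul_left_cancel₀ hq
  rw [ncard_torus_zeros_eq_numTorusZeros hι, card_mul_numTorusZeros,
    card_filter_extend_ne_zero hι hα, card_filter_extend_eq_zero hι hα, Fintype.card_fin,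
    Fintype.card_fin, hexp, Nat.add_sub_cancel, hsum]

/-- for `2 ≤ r ≤ s`, distinct indices `i_1,…,i_r` and nonzero coefficients
`α_1,…,α_r ∈ K`, the linear form `f = α_1 t_{i_1} + ⋯ + α_r t_{i_r}` satisfies
`|V_T(f)| = Σ_{i=1}^{r-1} (-1)^{i-1} (q-1)^{s-i}`. -/
theorem card_zeros_linear_form
    (q s r : ℕ) (hr2 : 2 ≤ r) (hrs : r ≤ s)
    (K : Type) [Field K] [Fintype K] (hK : Fintype.card K = q)
    (ι : Fin r → Fin s) (hι : Function.Injective ι)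
    (α : Fin r → K) (hα : ∀ i, α i ≠ 0) :
    ({P : Torus s K | eval P.1 (∑ i, C (α i) * X (ι i)) = 0}.ncard : ℤ)
      = ∑ i ∈ Finset.range (r - 1), (-1) ^ i * ((q : ℤ) - 1) ^ (s - (i + 1)) :=
  card_zeros_linear_form_general q s r hr2 K hK ι hι α hα
end

section
/- Let q ≥ 3 and let G be a connected tree on the vertex set {1,…,s} with s ≥ 3. Then the minimum distance of the edge code of G is δ(C_G) = (q−1)^s − (q−1)^{s−1} = (q−2)(q−1)^{s−1}. -/
open MvPolynomial

/-! A codeword is the evaluation of `f = ∑ λₑ tₑ`, the sum running over the edges of a forest.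
If `f ≠ 0`, a pendant edge `{u, v}` of the support of `λ` gives `f = λ_{uv} t_u t_v + R` with
`λ_{uv} ≠ 0` and `R` free of `t_v`; as `t_u` is a unit on the torus, a zero of `f` is determined
by its coordinates other than `v`, so `f` has at most `(q-1)^{s-1}` zeros. Conversely a vertex `a`
with two neighbours `b, c` (it exists as `s ≥ 3`) gives the codeword of `t_a (t_b - t_c)`, which
vanishes exactly on `t_b = t_c` and is nonzero as soon as `K` has an element other than `0`, `1`. -/

namespace SimpleGraph

variable {V : Type*} {G : SimpleGraph V}

theorem IsAcyclic.exists_leaf [Finite V] (hG : G.IsAcyclic) {a b : V} (hab : G.Adj a b) :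
    ∃ v w, G.Adj v w ∧ ∀ w', G.Adj v w' → w' = w := by
  have : Nonempty V := ⟨a⟩
  obtain ⟨u, v, p, hp, hmax⟩ := Walk.exists_isPath_forall_isPath_length_le_length G
  have hnil : ¬p.Nil := by
    rw [← Walk.length_eq_zero_iff]
    have : 1 ≤ p.length := hmax a b hab.toWalk (by simp [hab.ne])
    omega
  refine ⟨u, p.snd, p.adj_snd hnil, fun w huw => hG.eq_snd_of_adj_start hp huw ?_⟩
  by_contra hw
  have := hmax w v (p.cons huw.symm) (hp.cons hw)
  simp at this

theorem IsAcyclic.exists_pendant_edge_of_subset_edgeSet [Finite V] (hG : G.IsAcyclic)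
    {D : Set (Sym2 V)} (hD : D ⊆ G.edgeSet) (hne : D.Nonempty) :
    ∃ u v, s(u, v) ∈ D ∧ ∀ e ∈ D, v ∈ e → e = s(u, v) := by
  have hHG : fromEdgeSet D ≤ G := by simpa using Set.sdiff_subset.trans hD
  obtain ⟨a, b, he⟩ := Sym2.exists.mp hne
  have hab : (fromEdgeSet D).Adj a b := by
    simpa [he] using (G.mem_edgeSet.mp (hD he)).ne
  obtain ⟨v, u, hvu, hleaf⟩ := (hG.anti hHG).exists_leaf hab
  refine ⟨u, v, Sym2.eq_swap ▸ (fromEdgeSet_adj D).mp hvu |>.1, Sym2.ind fun x y he hve => ?_⟩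
  have hxy : x ≠ y := (G.mem_edgeSet.mp (hD he)).ne
  rcases Sym2.mem_iff.mp hve with rfl | rfl
  · rw [hleaf y (by simpa [he] using hxy), Sym2.eq_swap]
  · rw [hleaf x ((fromEdgeSet_adj D).mpr ⟨Sym2.eq_swap ▸ he, hxy.symm⟩)]

theorem IsTree.exists_adj_adj_ne_of_three_le_card [Fintype V] (hG : G.IsTree)
    (hV : 3 ≤ Fintype.card V) :
    ∃ a b c, G.Adj a b ∧ G.Adj a c ∧ b ≠ c := by
  classical
  obtain ⟨a, ha⟩ : ∃ a, 1 < G.degree a := by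
    by_contra! h
    have hsum := G.sum_degrees_eq_twice_card_edges
    have hcard := hG.card_edgeFinset
    have : ∑ v, G.degree v ≤ Fintype.card V := by
      simpa using Finset.sum_le_sum fun v (_ : v ∈ Finset.univ) => h v
    omega
  obtain ⟨b, hb, c, hc, hbc⟩ := Finset.one_lt_card.mp ha
  exact ⟨a, b, c, (G.mem_neighborFinset a b).mp hb, (G.mem_neighborFinset a c).mp hc, hbc⟩

end SimpleGraph

theorem Nat.card_subtype_ne_zero {G₀ : Type*} [GroupWithZero G₀] :
    Nat.card {x : G₀ // x ≠ 0} = Nat.card G₀ - 1 := by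
  rw [← Nat.card_congr unitsEquivNeZero, Nat.card_units]

namespace Torus

variable {s : ℕ} {K : Type} [Field K] [Fintype K]

theorem natCard_eq : Nat.card (Torus s K) = (Fintype.card K - 1) ^ s := by
  rw [Nat.card_congr (Equiv.subtypePiEquivPi (p := fun _ x => x ≠ 0)), Nat.card_pi,
    Finset.prod_const, Nat.card_subtype_ne_zero, Nat.card_eq_fintype_card, Finset.card_univ,
    Fintype.card_fin]

theorem natCard_coords_ne (v : Fin s) :
    Nat.card ({i // i ≠ v} → {x : K // x ≠ 0}) = (Fintype.card K - 1) ^ (s - 1) := by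
  simp [Nat.card_fun, Nat.card_subtype_ne_zero, Nat.card_eq_fintype_card,
    Fintype.card_subtype_compl]

theorem ncard_le_of_forall_ne_eq (v : Fin s) {S : Set (Torus s K)}
    (hS : ∀ P ∈ S, ∀ Q ∈ S, (∀ i ≠ v, P.1 i = Q.1 i) → P = Q) :
    S.ncard ≤ (Fintype.card K - 1) ^ (s - 1) := by
  rw [← natCard_coords_ne v, ← Set.ncard_univ]
  refine Set.ncard_le_ncard_of_injOn (fun P i => ⟨P.1 i, P.2 i⟩) (fun _ _ => Set.mem_univ _)
    (fun P hP Q hQ hPQ => hS P hP Q hQ fun i hi => ?_) Set.finite_univ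
  exact congrArg Subtype.val (congrFun hPQ ⟨i, hi⟩)

theorem le_ncard_setOf_eq {b c : Fin s} (hbc : b ≠ c) :
    (Fintype.card K - 1) ^ (s - 1) ≤ {P : Torus s K | P.1 b = P.1 c}.ncard := by
  classical
  let extend (g : {i // i ≠ b} → {x : K // x ≠ 0}) : Torus s K :=
    ⟨fun i => if h : i = b then g ⟨c, hbc.symm⟩ else g ⟨i, h⟩,
      fun i => by dsimp only; split <;> exact (g _).2⟩
  rw [← natCard_coords_ne b, ← Set.ncard_univ]
  refine Set.ncard_le_ncard_of_injOn extend (fun g _ => by simp [extend, hbc.symm])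
    (fun g _ g' _ hgg' => funext fun i => Subtype.ext ?_) (Set.toFinite _)
  simpa [extend, i.2] using congrFun (congrArg Subtype.val hgg') i

theorem wt_add_ncard_setOf_eq_zero (c : Torus s K → K) :
    wt c + {P | c P = 0}.ncard = (Fintype.card K - 1) ^ s := by
  rw [wt, ← natCard_eq, ← Set.ncard_add_ncard_compl {P | c P ≠ 0}]
  congr 2
  ext P
  simp

end Torus

section EdgeCode

variable {s : ℕ} {K : Type} [Field K]

theorem evalTorus_apply (f : MvPolynomial (Fin s) K) (P : Torus s K) :
    evalTorus s K f P = aeval P.1 f := rfl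

@[simp]
theorem aeval_edgeMonSym2 (x : Fin s → K) (i j : Fin s) :
    aeval x (edgeMonSym2 s K s(i, j)) = x i * x j := by
  simp [edgeMonSym2]

theorem aeval_edgeMonSym2_congr {e : Sym2 (Fin s)} {x y : Fin s → K}
    (h : ∀ i ∈ e, x i = y i) : aeval x (edgeMonSym2 s K e) = aeval y (edgeMonSym2 s K e) := by
  induction e using Sym2.ind with
  | _ i j => simp [h i (Sym2.mem_mk_left i j), h j (Sym2.mem_mk_right i j)]

theorem exists_forall_eq_of_evalTorus_eq_zero {G : SimpleGraph (Fin s)} (hG : G.IsAcyclic)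
    {f : MvPolynomial (Fin s) K} (hf : f ∈ Submodule.span K (edgeMonSym2 s K '' G.edgeSet))
    (hf0 : f ≠ 0) :
    ∃ v, ∀ P Q : Torus s K, evalTorus s K f P = 0 → evalTorus s K f Q = 0 →
      (∀ i ≠ v, P.1 i = Q.1 i) → P = Q := by
  classical
  obtain ⟨l, hl, rfl⟩ := (Finsupp.mem_span_image_iff_linearCombination K).mp hf
  have hl0 : (l.support : Set (Sym2 (Fin s))).Nonempty := by
    rw [Finset.coe_nonempty, Finsupp.support_nonempty_iff]
    rintro rfl
    exact hf0 (map_zero _)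
  obtain ⟨u, v, huv, hleaf⟩ := hG.exists_pendant_edge_of_subset_edgeSet hl hl0
  have hne : u ≠ v := (G.mem_edgeSet.mp (hl huv)).ne
  have hc : l s(u, v) ≠ 0 := Finsupp.mem_support_iff.mp huv
  set R : Torus s K → K := fun P =>
    ∑ e ∈ l.support.erase s(u, v), l e * aeval P.1 (edgeMonSym2 s K e)
  have hsplit (P : Torus s K) :
      evalTorus s K (Finsupp.linearCombination K (edgeMonSym2 s K) l) P =
        l s(u, v) * P.1 u * P.1 v + R P := by
    rw [evalTorus_apply, Finsupp.linearCombination_apply, Finsupp.sum, map_sum,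
      ← Finset.add_sum_erase _ _ huv]
    simp [R, mul_assoc]
  refine ⟨v, fun P Q hP hQ hPQ => ?_⟩
  have hR : R P = R Q := Finset.sum_congr rfl fun e he => by
    have hve : v ∉ e := fun hv =>
      (Finset.mem_erase.mp he).1 (hleaf e (Finset.mem_of_mem_erase he) hv)
    rw [aeval_edgeMonSym2_congr fun i hi => hPQ i (ne_of_mem_of_not_mem hi hve)]
  have hv : P.1 v = Q.1 v := by
    have h := (hsplit P).symm.trans (hP.trans (hQ.symm.trans (hsplit Q)))
    rw [hR, hPQ u hne] at h
    exact mul_left_cancel₀ (mul_ne_zero hc (Q.2 u)) (add_right_cancel h)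
  ext i
  by_cases hi : i = v
  · rw [hi, hv]
  · exact hPQ i hi

end EdgeCode

section Weights

variable {s : ℕ} {K : Type} [Field K] [Fintype K]

theorem le_wt_of_mem_graphCode {G : SimpleGraph (Fin s)} (hG : G.IsAcyclic)
    {c : Torus s K → K} (hc : c ∈ graphCode s K G) (hc0 : c ≠ 0) :
    (Fintype.card K - 1) ^ s - (Fintype.card K - 1) ^ (s - 1) ≤ wt c := by
  obtain ⟨f, hf, rfl⟩ := hc
  obtain ⟨v, hv⟩ :=
    exists_forall_eq_of_evalTorus_eq_zero hG hf (by rintro rfl; exact hc0 (map_zero _))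
  have hzeros := Torus.ncard_le_of_forall_ne_eq v (S := {P | evalTorus s K f P = 0})
    fun P hP Q hQ => hv P Q hP hQ
  have := Torus.wt_add_ncard_setOf_eq_zero (evalTorus s K f)
  omega

theorem exists_wt_le_of_adj_of_adj {G : SimpleGraph (Fin s)} {a b c : Fin s} (hab : G.Adj a b)
    (hac : G.Adj a c) (hbc : b ≠ c) (hK : 2 < Fintype.card K) :
    ∃ w ∈ graphCode s K G, w ≠ 0 ∧
      wt w ≤ (Fintype.card K - 1) ^ s - (Fintype.card K - 1) ^ (s - 1) := by
  classical
  set f := edgeMonSym2 s K s(a, b) - edgeMonSym2 s K s(a, c)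
  have hf : f ∈ Submodule.span K (edgeMonSym2 s K '' G.edgeSet) :=
    sub_mem (Submodule.subset_span ⟨_, G.mem_edgeSet.mpr hab, rfl⟩)
      (Submodule.subset_span ⟨_, G.mem_edgeSet.mpr hac, rfl⟩)
  have heval (P : Torus s K) : evalTorus s K f P = P.1 a * (P.1 b - P.1 c) := by
    simp only [f, evalTorus_apply, map_sub, aeval_edgeMonSym2, mul_sub]
  have hzeros : {P | evalTorus s K f P = 0} = {P : Torus s K | P.1 b = P.1 c} := by
    ext P
    simp [heval, P.2 a, sub_eq_zero]
  obtain ⟨u, -, hu⟩ := Finset.exists_mem_notMem_of_card_lt_card (s := ({0, 1} : Finset K))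
    (t := Finset.univ) ((Finset.card_le_two).trans_lt (by simpa using hK))
  obtain ⟨hu0, hu1⟩ : u ≠ 0 ∧ u ≠ 1 := by simpa using hu
  let P : Torus s K := ⟨Function.update 1 c u, fun i => by
    rcases eq_or_ne i c with rfl | hi <;> simp [*]⟩
  refine ⟨evalTorus s K f, ⟨f, hf, rfl⟩, fun h0 => ?_, ?_⟩
  · have h := congrFun h0 P
    simp [heval, P, G.ne_of_adj hac, hbc, sub_eq_zero] at h
    exact hu1 h.symm
  · have hsum := Torus.wt_add_ncard_setOf_eq_zero (evalTorus s K f)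
    have hzeros_le := Torus.le_ncard_setOf_eq (K := K) hbc
    rw [hzeros] at hsum
    omega

end Weights

theorem minDist_eq_of_forall_le_wt {s : ℕ} {K : Type} [Field K]
    {C : Submodule K (Torus s K → K)} {d : ℕ} (hle : ∀ c ∈ C, c ≠ 0 → d ≤ wt c)
    (hex : ∃ c ∈ C, c ≠ 0 ∧ wt c ≤ d) :
    minDist C = d := by
  obtain ⟨c, hc, hc0, hwc⟩ := hex
  unfold minDist
  apply le_antisymm
  · exact le_trans (Nat.sInf_le ⟨c, hc, hc0, rfl⟩) hwc
  · refine le_csInf ⟨_, c, hc, hc0, rfl⟩ ?_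
    rintro _ ⟨c', hc', hc'0, rfl⟩
    exact hle c' hc' hc'0

/-- for `q ≥ 3` and a connected tree `G` on `{1,…,s}` with `s ≥ 3`, the
minimum distance of the edge code of `G` is `(q-1)^s - (q-1)^{s-1} = (q-2)(q-1)^{s-1}`. -/
theorem minDist_edgeCode_tree
    (q s : ℕ) (hq : 3 ≤ q) (hs : 3 ≤ s)
    (K : Type) [Field K] [Fintype K] (hK : Fintype.card K = q)
    (G : SimpleGraph (Fin s)) (hG : G.IsTree) :
    minDist (graphCode s K G) = (q - 1) ^ s - (q - 1) ^ (s - 1) ∧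
    (q - 1) ^ s - (q - 1) ^ (s - 1) = (q - 2) * (q - 1) ^ (s - 1) := by
  subst hK
  obtain ⟨a, b, c, hab, hac, hbc⟩ := hG.exists_adj_adj_ne_of_three_le_card (by simpa using hs)
  refine ⟨minDist_eq_of_forall_le_wt (fun w hw hw0 => le_wt_of_mem_graphCode hG.isAcyclic hw hw0)
    (exists_wt_le_of_adj_of_adj hab hac hbc (by omega)), ?_⟩
  rw [← Nat.sub_add_cancel (by omega : 1 ≤ s), pow_succ', Nat.add_sub_cancel, ← Nat.sub_one_mul,
    Nat.sub_sub]
end
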